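/- One-step progress in terms of the new (sub)gradient: let f : E → ℝ be twice continuously differentiable with L-Lipschitz-continuous Hessian (L > 0), ψ : E → ℝ convex, x ∈ E, s a subgradient of ψ at x, H symmetric positive semidefinite with ‖H − ∇²f(x)‖ ≤ β for some β ≥ 0, and α ≥ √(L‖∇f(x) + s‖/2) + β with α > 0. If x⁺ is a composite step from x with parameters (H, α), then F(x) − F(x⁺) ≥ ‖F'(x⁺)‖²/(8α), where F := f + ψ and F'(x⁺) := ∇f(x⁺) − ∇f(x) − (H + αI)(x⁺ − x). -/

import Mathlib

open scoped RealInnerProductSpace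
open Real Set

def IsSymmPSD {n : ℕ} (H : EuclideanSpace ℝ (Fin n) →L[ℝ] EuclideanSpace ℝ (Fin n)) : Prop :=
  (∀ u v, ⟪H u, v⟫ = ⟪u, H v⟫) ∧ ∀ u, 0 ≤ ⟪H u, u⟫

def IsSubgradAt {n : ℕ} (ψ : EuclideanSpace ℝ (Fin n) → ℝ)
    (s x : EuclideanSpace ℝ (Fin n)) : Prop :=
  ∀ y, ψ x + ⟪s, y - x⟫ ≤ ψ y

def CompositeStep {n : ℕ} (g : EuclideanSpace ℝ (Fin n))
    (H : EuclideanSpace ℝ (Fin n) →L[ℝ] EuclideanSpace ℝ (Fin n)) (α : ℝ)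
    (ψ : EuclideanSpace ℝ (Fin n) → ℝ) (x xp : EuclideanSpace ℝ (Fin n)) : Prop :=
  ∀ y, ψ xp ≤ ⟪g + (H (xp - x) + α • (xp - x)), y - xp⟫ + ψ y

noncomputable def hess {n : ℕ} (f : EuclideanSpace ℝ (Fin n) → ℝ)
    (x : EuclideanSpace ℝ (Fin n)) :
    EuclideanSpace ℝ (Fin n) →L[ℝ] EuclideanSpace ℝ (Fin n) :=
  fderiv ℝ (gradient f) x

/-!
Write `r = x⁺ - x` and `ρ = ‖r‖`. Testing the optimality condition of the step at `y = x` and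
adding the subgradient inequality gives `α ρ ≤ ‖∇f(x) + s‖`, so the choice of `α` forces
`L ρ / 2 ≤ α - β`. With this, the Taylor estimates for a Lipschitz Hessian give
`F(x) - F(x⁺) ≥ α ρ² / 2` and `‖F'(x⁺)‖ ≤ 2 α ρ`.
-/

section Taylor

variable {E F : Type*} [NormedAddCommGroup E] [NormedAddCommGroup F] [NormedSpace ℝ F]

theorem norm_le_div_of_hasDerivAt_of_norm_le_mul_pow {φ φ' : ℝ → F} {C : ℝ} (k : ℕ)
    (hφ : ∀ t, HasDerivAt φ (φ' t) t) (h0 : φ 0 = 0)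
    (hbound : ∀ t ∈ Ico (0 : ℝ) 1, ‖φ' t‖ ≤ C * t ^ k) :
    ‖φ 1‖ ≤ C / (k + 1) := by
  have hB : ∀ t, HasDerivAt (fun t ↦ C / (k + 1) * t ^ (k + 1)) (C * t ^ k) t := fun t ↦
    ((hasDerivAt_pow (k + 1) t).const_mul (C / (k + 1))).congr_deriv (by
      rw [Nat.add_sub_cancel]; push_cast; field_simp)
  simpa using image_norm_le_of_norm_deriv_right_le_deriv_boundary
    (fun t _ ↦ (hφ t).continuousAt.continuousWithinAt) (fun t _ ↦ (hφ t).hasDerivWithinAt)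
    (by simp [h0]) hB hbound (right_mem_Icc.mpr zero_le_one)

theorem norm_sub_sub_fderiv_le_of_lipschitz [NormedSpace ℝ E] {g : E → F} {g' : E → E →L[ℝ] F}
    {L : ℝ} (hg : ∀ y, HasFDerivAt g (g' y) y) (hLip : ∀ a b, ‖g' a - g' b‖ ≤ L * ‖a - b‖)
    (x y : E) :
    ‖g y - g x - g' x (y - x)‖ ≤ L / 2 * ‖y - x‖ ^ 2 := by
  set r := y - x
  have hφ : ∀ t : ℝ, HasDerivAt (fun t ↦ g (x + t • r) - g x - t • g' x r)
      (g' (x + t • r) r - g' x r) t := fun t ↦ by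
    have hline : HasDerivAt (fun t : ℝ ↦ x + t • r) r t := by
      simpa using ((hasDerivAt_id t).smul_const r).const_add x
    exact (((hg _).comp_hasDerivAt t hline).sub_const (g x)).sub
      (by simpa using (hasDerivAt_id t).smul_const (g' x r))
  have hbound : ∀ t ∈ Ico (0 : ℝ) 1, ‖g' (x + t • r) r - g' x r‖ ≤ L * ‖r‖ ^ 2 * t ^ 1 :=
    fun t ht ↦ calc
      ‖g' (x + t • r) r - g' x r‖ = ‖(g' (x + t • r) - g' x) r‖ := rfl
      _ ≤ ‖g' (x + t • r) - g' x‖ * ‖r‖ := ContinuousLinearMap.le_opNorm _ _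
      _ ≤ L * ‖x + t • r - x‖ * ‖r‖ := by gcongr; exact hLip _ _
      _ = L * ‖r‖ ^ 2 * t ^ 1 := by
        rw [add_sub_cancel_left, norm_smul, Real.norm_of_nonneg ht.1]; ring
  have := norm_le_div_of_hasDerivAt_of_norm_le_mul_pow 1 hφ (by simp) hbound
  simp only [one_smul, add_sub_cancel, r] at this
  linarith

theorem norm_sub_sub_add_smul_le_of_lipschitz [NormedSpace ℝ E] {g : E → E}
    {g' : E → E →L[ℝ] E} {H : E →L[ℝ] E} {L β α : ℝ} {x : E} (hg : ∀ y, HasFDerivAt g (g' y) y)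
    (hLip : ∀ a b, ‖g' a - g' b‖ ≤ L * ‖a - b‖) (hHerr : ‖H - g' x‖ ≤ β) (hα : 0 ≤ α) (y : E) :
    ‖g y - g x - (H (y - x) + α • (y - x))‖ ≤ L / 2 * ‖y - x‖ ^ 2 + β * ‖y - x‖ + α * ‖y - x‖ := by
  calc ‖g y - g x - (H (y - x) + α • (y - x))‖
        = ‖(g y - g x - g' x (y - x)) - ((H - g' x) (y - x) + α • (y - x))‖ := by
          rw [sub_apply]; congr 1; abel
    _ ≤ ‖g y - g x - g' x (y - x)‖ + (‖(H - g' x) (y - x)‖ + ‖α • (y - x)‖) :=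
        (norm_sub_le _ _).trans (by gcongr; exact norm_add_le _ _)
    _ ≤ L / 2 * ‖y - x‖ ^ 2 + (β * ‖y - x‖ + α * ‖y - x‖) := by
        gcongr
        · exact norm_sub_sub_fderiv_le_of_lipschitz hg hLip x y
        · exact ((H - g' x).le_opNorm _).trans (by gcongr)
        · rw [norm_smul, Real.norm_of_nonneg hα]
    _ = L / 2 * ‖y - x‖ ^ 2 + β * ‖y - x‖ + α * ‖y - x‖ := by ring

end Taylor

section InnerProduct

variable {E : Type*} [NormedAddCommGroup E] [InnerProductSpace ℝ E]

theorem abs_inner_apply_self_le (T : E →L[ℝ] E) (r : E) : |⟪T r, r⟫| ≤ ‖T‖ * ‖r‖ ^ 2 := calc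
  |⟪T r, r⟫| ≤ ‖T r‖ * ‖r‖ := abs_real_inner_le_norm _ _
  _ ≤ ‖T‖ * ‖r‖ * ‖r‖ := by gcongr; exact T.le_opNorm r
  _ = ‖T‖ * ‖r‖ ^ 2 := by ring

theorem abs_sub_sub_inner_sub_le_of_lipschitz_hessian [CompleteSpace E] {f : E → ℝ}
    {A : E → E →L[ℝ] E} {L : ℝ} (hf : Differentiable ℝ f)
    (hA : ∀ y, HasFDerivAt (gradient f) (A y) y)
    (hLip : ∀ a b, ‖A a - A b‖ ≤ L * ‖a - b‖) (x y : E) :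
    |f y - f x - ⟪gradient f x, y - x⟫ - ⟪A x (y - x), y - x⟫ / 2| ≤ L / 6 * ‖y - x‖ ^ 3 := by
  set r := y - x
  have hφ : ∀ t : ℝ, HasDerivAt
      (fun t ↦ f (x + t • r) - f x - t * ⟪gradient f x, r⟫ - t ^ 2 / 2 * ⟪A x r, r⟫)
      ⟪gradient f (x + t • r) - gradient f x - A x (t • r), r⟫ t := fun t ↦ by
    have hline : HasDerivAt (fun t : ℝ ↦ x + t • r) r t := by
      simpa using ((hasDerivAt_id t).smul_const r).const_add x
    have hf_line : HasDerivAt (fun t ↦ f (x + t • r)) ⟪gradient f (x + t • r), r⟫ t := by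
      simpa [Function.comp_def] using (hf _).hasGradientAt.hasFDerivAt.comp_hasDerivAt t hline
    refine (((hf_line.sub_const (f x)).sub ((hasDerivAt_id t).mul_const _)).sub
      (((hasDerivAt_pow 2 t).div_const 2).mul_const ⟪A x r, r⟫)).congr_deriv ?_
    rw [map_smul, inner_sub_left, inner_sub_left, real_inner_smul_left]
    ring
  have hbound : ∀ t ∈ Ico (0 : ℝ) 1,
      ‖⟪gradient f (x + t • r) - gradient f x - A x (t • r), r⟫‖ ≤ L / 2 * ‖r‖ ^ 3 * t ^ 2 :=
    fun t ht ↦ calc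
      _ ≤ ‖gradient f (x + t • r) - gradient f x - A x (t • r)‖ * ‖r‖ := norm_inner_le_norm _ _
      _ ≤ L / 2 * ‖t • r‖ ^ 2 * ‖r‖ := by
        gcongr
        simpa using norm_sub_sub_fderiv_le_of_lipschitz hA hLip x (x + t • r)
      _ = L / 2 * ‖r‖ ^ 3 * t ^ 2 := by
        rw [norm_smul, Real.norm_of_nonneg ht.1]; ring
  have := norm_le_div_of_hasDerivAt_of_norm_le_mul_pow 2 hφ (by simp) hbound
  simp only [one_smul, add_sub_cancel, r, Real.norm_eq_abs] at this
  convert this using 2 <;> push_cast <;> ring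

end InnerProduct

theorem hasFDerivAt_gradient_hess {n : ℕ} {f : EuclideanSpace ℝ (Fin n) → ℝ}
    (hf : ContDiff ℝ 2 f) (y : EuclideanSpace ℝ (Fin n)) :
    HasFDerivAt (gradient f) (hess f y) y :=
  have : ContDiff ℝ 1 (gradient f) :=
    (InnerProductSpace.toDual ℝ _).symm.contDiff.comp (hf.fderiv_right (by norm_num))
  (this.differentiable (by norm_num) y).hasFDerivAt

namespace CompositeStep

variable {n : ℕ} {g s x xp : EuclideanSpace ℝ (Fin n)}
  {H : EuclideanSpace ℝ (Fin n) →L[ℝ] EuclideanSpace ℝ (Fin n)} {α : ℝ}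
  {ψ : EuclideanSpace ℝ (Fin n) → ℝ}

theorem inner_add_inner_add_mul_sq_le (hstep : CompositeStep g H α ψ x xp) :
    ⟪g, xp - x⟫ + ⟪H (xp - x), xp - x⟫ + α * ‖xp - x‖ ^ 2 ≤ ψ x - ψ xp := by
  have h := hstep x
  rw [← neg_sub xp x, inner_neg_right, inner_add_left, inner_add_left, real_inner_smul_left,
    real_inner_self_eq_norm_sq] at h
  linarith

theorem mul_norm_sub_le (hstep : CompositeStep g H α ψ x xp) (hs : IsSubgradAt ψ s x)
    (hH : IsSymmPSD H) : α * ‖xp - x‖ ≤ ‖g + s‖ := by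
  have hopt := hstep.inner_add_inner_add_mul_sq_le
  have hsub := hs xp
  have hHr := hH.2 (xp - x)
  have hcs := real_inner_le_norm (-(g + s)) (xp - x)
  rw [inner_neg_left, inner_add_left, norm_neg] at hcs
  have key : α * ‖xp - x‖ * ‖xp - x‖ ≤ ‖g + s‖ * ‖xp - x‖ := by nlinarith
  rcases (norm_nonneg (xp - x)).eq_or_lt with h0 | hpos
  · rw [← h0, mul_zero]
    exact norm_nonneg _
  · exact le_of_mul_le_mul_right key hpos

theorem le_sub_of_lipschitz_hessian {f : EuclideanSpace ℝ (Fin n) → ℝ}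
    {A : EuclideanSpace ℝ (Fin n) → EuclideanSpace ℝ (Fin n) →L[ℝ] EuclideanSpace ℝ (Fin n)}
    {L β : ℝ} (hstep : CompositeStep (gradient f x) H α ψ x xp) (hH : IsSymmPSD H)
    (hf : Differentiable ℝ f) (hA : ∀ y, HasFDerivAt (gradient f) (A y) y)
    (hLip : ∀ a b, ‖A a - A b‖ ≤ L * ‖a - b‖) (hHerr : ‖H - A x‖ ≤ β) :
    α * ‖xp - x‖ ^ 2 - β / 2 * ‖xp - x‖ ^ 2 - L / 6 * ‖xp - x‖ ^ 3
      ≤ (f x + ψ x) - (f xp + ψ xp) := by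
  have hopt := hstep.inner_add_inner_add_mul_sq_le
  have htaylor := le_of_abs_le (abs_sub_sub_inner_sub_le_of_lipschitz_hessian hf hA hLip x xp)
  have hHr := hH.2 (xp - x)
  have hHA := neg_le_of_abs_le (abs_inner_apply_self_le (H - A x) (xp - x))
  rw [sub_apply, inner_sub_left] at hHA
  nlinarith [mul_le_mul_of_nonneg_right hHerr (sq_nonneg ‖xp - x‖)]

end CompositeStep

theorem mul_div_two_le_sub_of_sqrt_add_le {L G α β ρ : ℝ} (hL : 0 ≤ L) (hβ : 0 ≤ β) (hα : 0 < α)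
    (hsqrt : √(L * G / 2) + β ≤ α) (hαρ : α * ρ ≤ G) : L * ρ / 2 ≤ α - β := by
  have hαβ : 0 ≤ α - β := by linarith [Real.sqrt_nonneg (L * G / 2)]
  have hsq : L * G / 2 ≤ (α - β) ^ 2 := (Real.sqrt_le_left hαβ).mp (by linarith)
  have : α * (L * ρ / 2) ≤ α * (α - β) := by
    nlinarith [mul_le_mul_of_nonneg_left hαρ hL, mul_nonneg hβ hαβ]
  exact le_of_mul_le_mul_left this hα

theorem sq_div_eight_mul_le {L α β ρ P D : ℝ} (hα : 0 < α) (hβα : β ≤ α) (hρ : 0 ≤ ρ)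
    (hLρ : L * ρ / 2 ≤ α - β) (hP₀ : 0 ≤ P) (hP : P ≤ L / 2 * ρ ^ 2 + β * ρ + α * ρ)
    (hD : α * ρ ^ 2 - β / 2 * ρ ^ 2 - L / 6 * ρ ^ 3 ≤ D) : P ^ 2 / (8 * α) ≤ D := by
  have hP' : P ≤ 2 * α * ρ := by nlinarith
  have hD' : α / 2 * ρ ^ 2 ≤ D := by nlinarith
  rw [div_le_iff₀ (by positivity)]
  nlinarith

theorem composite_step_one_step_progress_general {n : ℕ}
    (f : EuclideanSpace ℝ (Fin n) → ℝ) (hf : ContDiff ℝ 2 f)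
    (L : ℝ) (hL : 0 < L)
    (hLip : ∀ x y, ‖hess f x - hess f y‖ ≤ L * ‖x - y‖)
    (ψ : EuclideanSpace ℝ (Fin n) → ℝ)
    (x xp s : EuclideanSpace ℝ (Fin n)) (hs : IsSubgradAt ψ s x)
    (H : EuclideanSpace ℝ (Fin n) →L[ℝ] EuclideanSpace ℝ (Fin n)) (hH : IsSymmPSD H)
    (β : ℝ) (hHerr : ‖H - hess f x‖ ≤ β)
    (α : ℝ) (hαpos : 0 < α)
    (hα : Real.sqrt (L * ‖gradient f x + s‖ / 2) + β ≤ α)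
    (hstep : CompositeStep (gradient f x) H α ψ x xp) :
    ‖gradient f xp - gradient f x - (H (xp - x) + α • (xp - x))‖ ^ 2 / (8 * α)
      ≤ (f x + ψ x) - (f xp + ψ xp) := by
  have hA := hasFDerivAt_gradient_hess hf
  have hβ : 0 ≤ β := (norm_nonneg _).trans hHerr
  have hβα : β ≤ α := by linarith [Real.sqrt_nonneg (L * ‖gradient f x + s‖ / 2)]
  have hradius := mul_div_two_le_sub_of_sqrt_add_le hL.le hβ hαpos hα (hstep.mul_norm_sub_le hs hH)
  exact sq_div_eight_mul_le hαpos hβα (norm_nonneg _) hradius (norm_nonneg _)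
    (norm_sub_sub_add_smul_le_of_lipschitz hA hLip hHerr hαpos.le xp)
    (hstep.le_sub_of_lipschitz_hessian hH (hf.differentiable (by norm_num)) hA hLip hHerr)

/-- One-step progress in terms of the new (sub)gradient
`F'(x⁺) = ∇f(x⁺) − ∇f(x) − (H + αI)(x⁺ − x)`:
`F(x) − F(x⁺) ≥ ‖F'(x⁺)‖²/(8α)` where `F = f + ψ`. -/
theorem composite_step_one_step_progress {n : ℕ}
    (f : EuclideanSpace ℝ (Fin n) → ℝ) (hf : ContDiff ℝ 2 f)
    (L : ℝ) (hL : 0 < L)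
    (hLip : ∀ x y, ‖hess f x - hess f y‖ ≤ L * ‖x - y‖)
    (ψ : EuclideanSpace ℝ (Fin n) → ℝ) (hψ : ConvexOn ℝ Set.univ ψ)
    (x xp s : EuclideanSpace ℝ (Fin n)) (hs : IsSubgradAt ψ s x)
    (H : EuclideanSpace ℝ (Fin n) →L[ℝ] EuclideanSpace ℝ (Fin n)) (hH : IsSymmPSD H)
    (β : ℝ) (hβ : 0 ≤ β) (hHerr : ‖H - hess f x‖ ≤ β)
    (α : ℝ) (hαpos : 0 < α)
    (hα : Real.sqrt (L * ‖gradient f x + s‖ / 2) + β ≤ α)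
    (hstep : CompositeStep (gradient f x) H α ψ x xp) :
    ‖gradient f xp - gradient f x - (H (xp - x) + α • (xp - x))‖ ^ 2 / (8 * α)
      ≤ (f x + ψ x) - (f xp + ψ xp) :=
  composite_step_one_step_progress_general f hf L hL hLip ψ x xp s hs H hH β hHerr α hαpos hα hstep
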